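/- arXiv:2307.15234 — 3 statements merged into one kernel-verified Lean document; each statement's English description precedes it below -/
import Mathlib

section
/- Let γ ∈ GL_n(E) be a normal element such that σ(γ)γ is regular semisimple. Then the σ-twisted centralizer T_γ := {g ∈ GL_n(E) : g⁻¹γσ(g) = γ} is contained in GL_n(F); in fact T_γ equals the centralizer of σ(γ)γ in GL_n(F), i.e. T_γ = {g ∈ GL_n(F) : g·(σ(γ)γ) = (σ(γ)γ)·g}. -/
/-!
Write `N = σ(γ)γ`. Normality says `σ(N) = N`, i.e. also `N = γσ(γ)`, so `γ` commutes with `N`.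
If `γσ(g) = gγ`, applying `σ` shows that `σ(g)`, and then `g`, commute with `N`. Over an algebraic
closure a regular semisimple `N` is diagonal in an eigenbasis with distinct eigenvalues, so its
centralizer consists of matrices diagonal in that basis and is commutative. Hence `g` commutes
with `γ`, and `γσ(g) = gγ = γg` forces `σ(g) = g`.
-/

/-- A square matrix over a field `E` is regular semisimple if its characteristic
polynomial has `n` distinct roots in an algebraic closure of `E`. -/
def IsRegSemisimple {n : ℕ} {E : Type*} [Field E] (A : Matrix (Fin n) (Fin n) E) : Prop :=
  Multiset.card ((A.charpoly.map (algebraMap E (AlgebraicClosure E))).roots) = n ∧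
    ((A.charpoly.map (algebraMap E (AlgebraicClosure E))).roots).Nodup

open Matrix Polynomial

namespace Matrix

variable {ι K : Type*} [Fintype ι] [DecidableEq ι] [CommRing K] [IsDomain K]

theorem isDiag_of_commute_diagonal {d : ι → K} (hd : Function.Injective d) {M : Matrix ι ι K}
    (h : Commute (diagonal d) M) : M.IsDiag := by
  intro i j hij
  have hij' : d i * M i j = M i j * d j := by
    simpa [diagonal_mul, mul_diagonal] using congr_fun₂ h.eq i j
  have hzero : (d i - d j) * M i j = 0 := by rw [sub_mul, hij', mul_comm, sub_self]
  exact (mul_eq_zero.mp hzero).resolve_left (sub_ne_zero.mpr (hd.ne hij))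

theorem commute_of_commute_diagonal {d : ι → K} (hd : Function.Injective d)
    {B C : Matrix ι ι K} (hB : Commute (diagonal d) B) (hC : Commute (diagonal d) C) :
    Commute B C := by
  rw [← (isDiag_of_commute_diagonal hd hB).diagonal_diag,
    ← (isDiag_of_commute_diagonal hd hC).diagonal_diag]
  exact commute_diagonal _ _

end Matrix

namespace Module.End

variable {K V : Type*} [Field K] [AddCommGroup V] [Module K V] [FiniteDimensional K V]

theorem exists_basis_hasEigenvector_of_nodup_roots_charpoly [DecidableEq K] {f : End K V}
    (hcard : Multiset.card f.charpoly.roots = Module.finrank K V) (hnd : f.charpoly.roots.Nodup) :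
    ∃ b : Basis f.charpoly.roots.toFinset K V,
      ∀ μ : f.charpoly.roots.toFinset, f.HasEigenvector μ (b μ) := by
  have hval : ∀ μ : f.charpoly.roots.toFinset, f.HasEigenvalue μ := fun μ =>
    (hasEigenvalue_iff_isRoot_charpoly f μ).2 (isRoot_of_mem_roots (Multiset.mem_toFinset.1 μ.2))
  choose v hv using fun μ => (hval μ).exists_hasEigenvector
  have hli : LinearIndependent K v :=
    eigenvectors_linearIndependent' f _ Subtype.val_injective v hv
  have hcard' : Fintype.card f.charpoly.roots.toFinset = Module.finrank K V := by
    rw [Fintype.card_coe, Multiset.toFinset_card_of_nodup hnd, hcard]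
  exact ⟨basisOfLinearIndependentOfCardEqFinrank' v hli hcard', by simpa using hv⟩

theorem commute_of_commute_of_nodup_roots_charpoly {f g h : End K V}
    (hcard : Multiset.card f.charpoly.roots = Module.finrank K V) (hnd : f.charpoly.roots.Nodup)
    (hg : Commute f g) (hh : Commute f h) : Commute g h := by
  classical
  obtain ⟨b, hb⟩ := exists_basis_hasEigenvector_of_nodup_roots_charpoly hcard hnd
  let e := LinearMap.toMatrixAlgEquiv b
  have he : e f = diagonal ((↑) : f.charpoly.roots.toFinset → K) := by
    ext μ ν
    rcases eq_or_ne μ ν with rfl | hμν <;>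
      simp [e, LinearMap.toMatrixAlgEquiv_apply, fun ν => (hb ν).apply_eq_smul, *]
  rw [← commute_map_iff e.injective]
  exact commute_of_commute_diagonal Subtype.val_injective (he ▸ hg.map e) (he ▸ hh.map e)

end Module.End

namespace Matrix

variable {ι K : Type*} [Fintype ι] [DecidableEq ι] [Field K]

theorem commute_of_commute_of_nodup_roots_charpoly {A B C : Matrix ι ι K}
    (hcard : Multiset.card A.charpoly.roots = Fintype.card ι) (hnd : A.charpoly.roots.Nodup)
    (hB : Commute A B) (hC : Commute A C) : Commute B C := by
  have hcp : (toLinAlgEquiv' A).charpoly = A.charpoly := charpoly_toLin' A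
  rw [← commute_map_iff toLinAlgEquiv'.injective]
  refine Module.End.commute_of_commute_of_nodup_roots_charpoly ?_ ?_ (hB.map toLinAlgEquiv')
    (hC.map toLinAlgEquiv') <;> simpa [hcp]

end Matrix

theorem IsRegSemisimple.commute_of_commute {n : ℕ} {E : Type*} [Field E]
    {A B C : Matrix (Fin n) (Fin n) E} (hA : IsRegSemisimple A) (hB : Commute A B)
    (hC : Commute A C) : Commute B C := by
  let φ := (algebraMap E (AlgebraicClosure E)).mapMatrix (m := Fin n)
  rw [← commute_map_iff (f := φ) (map_injective (algebraMap E _).injective)]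
  refine commute_of_commute_of_nodup_roots_charpoly ?_ ?_ (hB.map φ) (hC.map φ) <;>
    simp [φ, charpoly_map, hA.1, hA.2]

section TwistedConjugacy

variable {R : Type*} [Ring R]

def twistedNorm (s : R →+* R) (γ : R) : R := s γ * γ

variable {s : R →+* R} {γ g : R}

theorem commute_twistedNorm_self (hs : ∀ x, s (s x) = x)
    (hN : s (twistedNorm s γ) = twistedNorm s γ) : Commute (twistedNorm s γ) γ := by
  have hN_eq : twistedNorm s γ = γ * s γ := by rw [← hN, twistedNorm, map_mul, hs]
  calc twistedNorm s γ * γ = γ * s γ * γ := by rw [hN_eq]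
    _ = γ * twistedNorm s γ := by rw [mul_assoc, twistedNorm]

theorem commute_twistedNorm_of_mul_map_eq (hs : ∀ x, s (s x) = x)
    (hN : s (twistedNorm s γ) = twistedNorm s γ) (hg : γ * s g = g * γ) :
    Commute (twistedNorm s γ) g := by
  have hg' : s γ * g = s g * s γ := by simpa [hs] using congrArg s hg
  have hsg : Commute (twistedNorm s γ) (s g) :=
    calc s γ * γ * s g = s γ * g * γ := by rw [mul_assoc, hg, mul_assoc]
      _ = s g * (s γ * γ) := by rw [hg', mul_assoc]
  simpa [hs, hN] using hsg.map s

theorem mul_map_eq_mul_iff_map_eq_and_commute (hs : ∀ x, s (s x) = x)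
    (hN : s (twistedNorm s γ) = twistedNorm s γ)
    (hcent : ∀ x y, Commute (twistedNorm s γ) x → Commute (twistedNorm s γ) y → Commute x y)
    (hγ : IsUnit γ) : γ * s g = g * γ ↔ s g = g ∧ Commute (twistedNorm s γ) g := by
  have hγN := commute_twistedNorm_self hs hN
  constructor
  · intro hg
    have hgN := commute_twistedNorm_of_mul_map_eq hs hN hg
    exact ⟨hγ.mul_left_cancel (hg.trans (hcent _ _ hγN hgN).eq.symm), hgN⟩
  · rintro ⟨hsg, hgN⟩
    rw [hsg]
    exact hcent _ _ hγN hgN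

end TwistedConjugacy

theorem twisted_centralizer_eq_rational_centralizer_general
    {F E : Type*} [Field F] [Field E] [Algebra F E]
    (σ : E ≃ₐ[F] E)
    (hσ2 : ∀ x : E, σ (σ x) = x)
    (hfix : ∀ x : E, σ x = x ↔ x ∈ Set.range (algebraMap F E))
    (n : ℕ)
    (γ : Matrix (Fin n) (Fin n) E) (hγ : IsUnit γ)
    (hnormal : ∀ i j, ((γ.map ⇑σ) * γ) i j ∈ Set.range (algebraMap F E))
    (hrss : IsRegSemisimple ((γ.map ⇑σ) * γ)) :
    {g : Matrix (Fin n) (Fin n) E | IsUnit g ∧ g⁻¹ * γ * g.map ⇑σ = γ} =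
    {g : Matrix (Fin n) (Fin n) E | IsUnit g ∧
      (∀ i j, g i j ∈ Set.range (algebraMap F E)) ∧
      g * ((γ.map ⇑σ) * γ) = ((γ.map ⇑σ) * γ) * g} := by
  let s : Matrix (Fin n) (Fin n) E →+* Matrix (Fin n) (Fin n) E := (σ : E →+* E).mapMatrix
  have hs : ∀ X, s (s X) = X := fun X => by ext; simp [s, hσ2]
  have hfixed : ∀ X, s X = X ↔ ∀ i j, X i j ∈ Set.range (algebraMap F E) := fun X => by
    simp [s, ← hfix, ← Matrix.ext_iff]
  have hN : s (twistedNorm s γ) = twistedNorm s γ := (hfixed _).2 hnormal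
  ext g
  refine and_congr_right fun hg => ?_
  have := hg.invertible
  change g⁻¹ * γ * s g = γ ↔ _
  rw [← hfixed, mul_assoc, inv_mul_eq_iff_eq_mul_of_invertible,
    mul_map_eq_mul_iff_map_eq_and_commute hs hN (fun _ _ => hrss.commute_of_commute) hγ]
  exact and_congr_right fun _ => eq_comm

theorem twisted_centralizer_eq_rational_centralizer
    {F E : Type*} [Field F] [Field E] [Algebra F E]
    (σ : E ≃ₐ[F] E)
    (hσ2 : ∀ x : E, σ (σ x) = x)
    (hfix : ∀ x : E, σ x = x ↔ x ∈ Set.range (algebraMap F E))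
    (hdeg : Module.finrank F E = 2)
    (n : ℕ) (hn : 1 ≤ n)
    (γ : Matrix (Fin n) (Fin n) E) (hγ : IsUnit γ)
    (hnormal : ∀ i j, ((γ.map ⇑σ) * γ) i j ∈ Set.range (algebraMap F E))
    (hrss : IsRegSemisimple ((γ.map ⇑σ) * γ)) :
    {g : Matrix (Fin n) (Fin n) E | IsUnit g ∧ g⁻¹ * γ * g.map ⇑σ = γ} =
    {g : Matrix (Fin n) (Fin n) E | IsUnit g ∧
      (∀ i j, g i j ∈ Set.range (algebraMap F E)) ∧
      g * ((γ.map ⇑σ) * γ) = ((γ.map ⇑σ) * γ) * g} :=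
  twisted_centralizer_eq_rational_centralizer_general σ hσ2 hfix n γ hγ hnormal hrss
end

section
/- Let γ, γ' ∈ GL_n(E) be normal elements with the property that γ = γ' whenever γ and γ' are σ-conjugate. Let x, x' ∈ F_n be row vectors with entries in F and y, y' column vectors with entries in F⁻, and assume that the triples [σ(γ)γ, x, y] and [σ(γ')γ', x', y'] are regular semisimple elements of M_n(E). Then there exists h ∈ GL_n(E) with h⁻¹(σ(γ)γ)h = σ(γ')γ', xh = x' and h⁻¹y = y' if and only if γ = γ' and there exists t ∈ T_γ := {g ∈ GL_n(E) : g⁻¹γσ(g) = γ} with xt = x' and t⁻¹y = y'. -/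
/-!
Since `ξ = σ(γ)γ` has entries in `F`, it commutes with `γ`, and `γσ(γ) = σ(ξ) = ξ`. The vector
`y'` is cyclic for `ξ'`, so the centraliser of `ξ'` is the commutative algebra `E[ξ']`, and a
matrix intertwining `ξ'` with another matrix is determined by its value at `y'`. Applying this
to `h - σ(h)`, which vanishes at `y'` because `y, y'` are purely imaginary, shows `h ∈ GL_n(F)`.
Then `δ = h⁻¹γh` is σ-conjugate to `γ` and satisfies `δσ(δ) = σ(γ')γ'`; an explicit form of
Hilbert 90 makes `δ` and `γ'` σ-conjugate, so `γ = γ'` by hypothesis, and `h` centralises `γ`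
because both lie in `E[ξ]`. Conversely, `t⁻¹γσ(t) = γ` forces `t` to centralise `γσ(γ) = ξ`.
-/

open Matrix

/-- A triple `[ξ, x, y] ∈ M_n(E)` (ξ a matrix, x a row vector, y a column vector)
is regular semisimple: ξ is regular semisimple, the row vectors x, xξ, …, xξⁿ⁻¹
span E_n, and the column vectors y, ξy, …, ξⁿ⁻¹y span Eⁿ. -/
def TripleRegSemisimple {n : ℕ} {E : Type*} [Field E]
    (ξ : Matrix (Fin n) (Fin n) E) (x y : Fin n → E) : Prop :=
  IsRegSemisimple ξ ∧
    Submodule.span E (Set.range fun k : Fin n => Matrix.vecMul x (ξ ^ (k : ℕ))) = ⊤ ∧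
    Submodule.span E (Set.range fun k : Fin n => Matrix.mulVec (ξ ^ (k : ℕ)) y) = ⊤

namespace Matrix

section Cyclic

variable {ι E : Type*} [Fintype ι] [DecidableEq ι] [Field E]

def IsCyclicVector (ξ : Matrix ι ι E) (y : ι → E) : Prop :=
  Submodule.span E (Set.range fun k : ℕ => (ξ ^ k) *ᵥ y) = ⊤

namespace IsCyclicVector

variable {ξ ξ' : Matrix ι ι E} {y : ι → E}

theorem of_span_fin {m : ℕ}
    (h : Submodule.span E (Set.range fun k : Fin m => (ξ ^ (k : ℕ)) *ᵥ y) = ⊤) :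
    ξ.IsCyclicVector y :=
  top_le_iff.mp <| h ▸ Submodule.span_mono (Set.range_subset_iff.mpr fun k => ⟨k, rfl⟩)

theorem eq_zero_of_mul_eq_mul_of_mulVec_eq_zero {d : Matrix ι ι E} (hy : ξ'.IsCyclicVector y)
    (hd : d * ξ' = ξ * d) (hdy : d *ᵥ y = 0) : d = 0 := by
  have hpow (k : ℕ) : d * ξ' ^ k = ξ ^ k * d := (SemiconjBy.pow_right hd k :)
  refine toLin'.injective (LinearMap.ext_on hy ?_)
  rintro _ ⟨k, rfl⟩
  change d *ᵥ _ = 0 *ᵥ _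
  rw [mulVec_mulVec, hpow, ← mulVec_mulVec, hdy, mulVec_zero, zero_mulVec]

theorem mem_adjoin_of_commute {c : Matrix ι ι E} (hy : ξ.IsCyclicVector y) (hc : Commute c ξ) :
    c ∈ Algebra.adjoin E {ξ} := by
  let evalAt : Matrix ι ι E →ₗ[E] ι → E := LinearMap.applyₗ y ∘ₗ toLin'.toLinearMap
  have hspan : Submodule.span E (Set.range fun k : ℕ => (ξ ^ k) *ᵥ y) ≤
      (Subalgebra.toSubmodule (Algebra.adjoin E {ξ})).map evalAt := by
    refine Submodule.span_le.mpr ?_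
    rintro _ ⟨k, rfl⟩
    exact ⟨ξ ^ k, pow_mem (Algebra.self_mem_adjoin_singleton E ξ) k, rfl⟩
  obtain ⟨p, hp, hpy⟩ := hspan (hy.symm ▸ Submodule.mem_top : c *ᵥ y ∈ _)
  have hcp : c - p = 0 := by
    refine hy.eq_zero_of_mul_eq_mul_of_mulVec_eq_zero (ξ := ξ) ?_ ?_
    · rw [sub_mul, mul_sub, hc.eq, (Algebra.commute_of_mem_adjoin_self hp).eq]
    · simp [sub_mulVec, ← hpy, evalAt]
  exact sub_eq_zero.mp hcp ▸ hp

theorem commute_of_commute {a b : Matrix ι ι E} (hy : ξ.IsCyclicVector y) (ha : Commute a ξ)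
    (hb : Commute b ξ) : Commute a b :=
  Algebra.commute_of_mem_adjoin_singleton_of_commute (hy.mem_adjoin_of_commute hb) ha

end IsCyclicVector

end Cyclic

open Polynomial in
theorem exists_nat_det_smul_add_ne_zero {ι R : Type*} [Fintype ι] [DecidableEq ι]
    [CommRing R] [IsDomain R] [CharZero R] {A B : Matrix ι ι R} {t : R}
    (ht : (t • A + B).det ≠ 0) : ∃ a : ℕ, ((a : R) • A + B).det ≠ 0 := by
  set p : R[X] := ((X : R[X]) • A.map C + B.map C).det
  have hp (s : R) : p.eval s = (s • A + B).det := by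
    rw [← coe_evalRingHom, RingHom.map_det]
    congr 1
    ext i j
    simp only [RingHom.mapMatrix_apply, map_apply, add_apply, smul_apply, smul_eq_mul, map_add,
      coe_evalRingHom, eval_mul, eval_X, eval_C]
  by_contra! hall
  refine ht ((hp t) ▸ ?_)
  rw [p.eq_zero_of_infinite_isRoot (Set.infinite_of_injective_forall_mem Nat.cast_injective
    fun a => (hp a).trans (hall a)), eval_zero]

section SigmaConj

variable {ι E S : Type*} [Fintype ι] [DecidableEq ι] [Field E] [FunLike S E E]

def IsSigmaConj (σ : S) (a b : Matrix ι ι E) : Prop :=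
  ∃ g : Matrix ι ι E, IsUnit g ∧ g⁻¹ * a * g.map σ = b

variable {σ : S}

theorem inv_mul_mul_eq_of_commute {h a : Matrix ι ι E} (hh : IsUnit h) (hc : Commute h a) :
    h⁻¹ * a * h = a := by
  rw [mul_assoc, ← hc.eq, nonsing_inv_mul_cancel_left _ _ ((isUnit_iff_isUnit_det h).mp hh)]

theorem isSigmaConj_inv_mul_mul {a h : Matrix ι ι E} (hh : IsUnit h) (hσh : h.map σ = h) :
    IsSigmaConj σ a (h⁻¹ * a * h) :=
  ⟨h, hh, by rw [hσh]⟩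

variable [RingHomClass S E E]

theorem IsSigmaConj.trans {a b c : Matrix ι ι E} (hab : IsSigmaConj σ a b)
    (hbc : IsSigmaConj σ b c) : IsSigmaConj σ a c := by
  obtain ⟨g, hg, rfl⟩ := hab
  obtain ⟨g', hg', rfl⟩ := hbc
  exact ⟨g * g', hg.mul hg', by simp only [Matrix.mul_inv_rev, Matrix.map_mul, mul_assoc]⟩

theorem map_nonsing_inv {a : Matrix ι ι E} (ha : IsUnit a) : a⁻¹.map σ = (a.map σ)⁻¹ := by
  refine (inv_eq_left_inv ?_).symm
  rw [← Matrix.map_mul, nonsing_inv_mul _ ((isUnit_iff_isUnit_det a).mp ha),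
    Matrix.map_one σ (map_zero σ) (map_one σ)]

/-- Hilbert 90: `v = a • (γ₁ + σ(γ₂)) + τ • (γ₁ - σ(γ₂))` satisfies `γ₁ σ(v) = v γ₂` for every
`σ`-fixed scalar `a`, and for `a = -τ` it is the unit `-2τ σ(γ₂)`, so it is a unit for all but
finitely many `a`. -/
theorem isSigmaConj_of_mul_map_eq_map_mul [CharZero E] (hσ : Function.Involutive σ) {τ : E}
    (hτ : τ ≠ 0) (hστ : σ τ = -τ) {γ₁ γ₂ : Matrix ι ι E} (hγ₂ : IsUnit γ₂)
    (h : γ₁ * γ₁.map σ = γ₂.map σ * γ₂) : IsSigmaConj σ γ₁ γ₂ := by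
  have hσγ₂ : IsUnit (γ₂.map σ).det :=
    (isUnit_iff_isUnit_det _).mp (hγ₂.map (RingHom.mapMatrix (σ : E →+* E)))
  obtain ⟨a, ha⟩ : ∃ a : ℕ, ((a : E) • (γ₁ + γ₂.map σ) + τ • (γ₁ - γ₂.map σ)).det ≠ 0 := by
    refine exists_nat_det_smul_add_ne_zero (t := -τ) ?_
    have : -τ • (γ₁ + γ₂.map σ) + τ • (γ₁ - γ₂.map σ) = (-2 * τ) • γ₂.map σ := by module
    rw [this, det_smul]
    exact mul_ne_zero (pow_ne_zero _ (by simpa using hτ)) hσγ₂.ne_zero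
  set v := (a : E) • (γ₁ + γ₂.map σ) + τ • (γ₁ - γ₂.map σ)
  have hσv : v.map σ = (a : E) • (γ₁.map σ + γ₂) - τ • (γ₁.map σ - γ₂) := by
    ext i j
    simp only [v, smul_add, map_apply, add_apply, smul_apply, smul_eq_mul, sub_apply, map_add,
      map_mul, map_natCast, hσ (γ₂ i j), hστ, map_sub, neg_mul]
    ring
  have hv : γ₁ * v.map σ = v * γ₂ := by
    rw [hσv]
    simp only [v, mul_add, mul_sub, add_mul, sub_mul, mul_smul_comm, smul_mul_assoc, h]
    module
  have hvdet : IsUnit v.det := isUnit_iff_ne_zero.mpr ha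
  refine ⟨v, (isUnit_iff_isUnit_det v).mpr hvdet, ?_⟩
  rw [mul_assoc, hv, nonsing_inv_mul_cancel_left _ _ hvdet]

theorem IsCyclicVector.map_eq_self_of_mul_eq_mul {ξ ξ' h : Matrix ι ι E} {y : ι → E}
    (hy : ξ'.IsCyclicVector y) (hξ : ξ.map σ = ξ) (hξ' : ξ'.map σ = ξ') (hh : h * ξ' = ξ * h)
    (hσy : ∀ i, σ (y i) = -y i) (hσhy : ∀ i, σ ((h *ᵥ y) i) = -(h *ᵥ y) i) :
    h.map σ = h := by
  have hσh : h.map σ * ξ' = ξ * h.map σ := by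
    simpa only [Matrix.map_mul, hξ, hξ'] using congrArg (·.map σ) hh
  have hσhy' : h.map σ *ᵥ y = h *ᵥ y := by
    ext i
    have := RingHom.map_mulVec (σ : E →+* E) h y i
    simp only [RingHom.coe_coe] at this
    rw [hσhy, show ⇑σ ∘ y = -y from funext hσy, mulVec_neg, Pi.neg_apply, neg_inj] at this
    exact this.symm
  refine sub_eq_zero.mp (hy.eq_zero_of_mul_eq_mul_of_mulVec_eq_zero (ξ := ξ) ?_ ?_)
  · rw [sub_mul, mul_sub, hσh, hh]
  · rw [sub_mulVec, hσhy', sub_self]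

theorem commute_mul_map_of_inv_mul_mul_map_eq (hσ : Function.Involutive σ)
    {t γ : Matrix ι ι E} (ht : IsUnit t) (h : t⁻¹ * γ * t.map σ = γ) :
    Commute t (γ * γ.map σ) := by
  have h₁ : γ * t.map σ = t * γ := by
    conv_rhs => rw [← h]
    rw [mul_assoc, mul_nonsing_inv_cancel_left _ _ ((isUnit_iff_isUnit_det t).mp ht)]
  have h₂ : γ.map σ * t = t.map σ * γ.map σ := by
    simpa only [Matrix.map_mul, Matrix.map_involutive hσ t] using congrArg (·.map σ) h₁
  calc t * (γ * γ.map σ) = γ * (t.map σ * γ.map σ) := by rw [← mul_assoc, ← h₁, mul_assoc]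
    _ = γ * γ.map σ * t := by rw [← h₂, mul_assoc]

end SigmaConj

end Matrix

theorem exists_ne_zero_map_eq_neg {F E S : Type*} [Field F] [Field E] [Algebra F E]
    [FunLike S E E] [RingHomClass S E E] {σ : S} (hσ : Function.Involutive σ)
    (hfix : ∀ x : E, σ x = x ↔ x ∈ Set.range (algebraMap F E)) (hrank : Module.finrank F E ≠ 1) :
    ∃ τ : E, τ ≠ 0 ∧ σ τ = -τ := by
  obtain ⟨e, he⟩ : ∃ e : E, σ e ≠ e := by
    by_contra! hσid
    exact hrank (Algebra.finrank_eq_one_iff_bijective_algebraMap.mpr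
      ⟨(algebraMap F E).injective, fun x => (hfix x).mp (hσid x)⟩)
  exact ⟨e - σ e, sub_ne_zero.mpr he.symm, by rw [map_sub, hσ e, neg_sub]⟩

theorem gl_side_orbit_matching_general
    {F E : Type*} [Field F] [Field E] [Algebra F E] [CharZero E]
    (σ : E ≃ₐ[F] E)
    (hσ2 : ∀ x : E, σ (σ x) = x)
    (hfix : ∀ x : E, σ x = x ↔ x ∈ Set.range (algebraMap F E))
    (hdeg : Module.finrank F E = 2)
    (n : ℕ)
    (γ γ' : Matrix (Fin n) (Fin n) E) (hγ' : IsUnit γ')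
    (hγnormal : ∀ i j, ((γ.map ⇑σ) * γ) i j ∈ Set.range (algebraMap F E))
    (hγ'normal : ∀ i j, ((γ'.map ⇑σ) * γ') i j ∈ Set.range (algebraMap F E))
    (hrep : (∃ g : Matrix (Fin n) (Fin n) E, IsUnit g ∧ g⁻¹ * γ * g.map ⇑σ = γ') → γ = γ')
    (x x' : Fin n → E)
    (y y' : Fin n → E)
    (hy : ∀ i, σ (y i) = - y i)
    (hy' : ∀ i, σ (y' i) = - y' i)
    (hrss' : TripleRegSemisimple ((γ'.map ⇑σ) * γ') x' y') :
    (∃ h : Matrix (Fin n) (Fin n) E, IsUnit h ∧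
        h⁻¹ * ((γ.map ⇑σ) * γ) * h = (γ'.map ⇑σ) * γ' ∧
        Matrix.vecMul x h = x' ∧ Matrix.mulVec h⁻¹ y = y') ↔
    (γ = γ' ∧ ∃ t : Matrix (Fin n) (Fin n) E, IsUnit t ∧ t⁻¹ * γ * t.map ⇑σ = γ ∧
        Matrix.vecMul x t = x' ∧ Matrix.mulVec t⁻¹ y = y') := by
  obtain ⟨τ, hτ, hστ⟩ := exists_ne_zero_map_eq_neg hσ2 hfix (by omega)
  have hξ : (γ.map σ * γ).map σ = γ.map σ * γ := by
    ext i j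
    exact (hfix _).2 (hγnormal i j)
  have hξ' : (γ'.map σ * γ').map σ = γ'.map σ * γ' := by
    ext i j
    exact (hfix _).2 (hγ'normal i j)
  have hnorm : γ * γ.map σ = γ.map σ * γ := by
    simpa only [Matrix.map_mul, Matrix.map_involutive hσ2 γ] using hξ
  have hcyc : (γ'.map σ * γ').IsCyclicVector y' := .of_span_fin hrss'.2.2
  constructor
  · rintro ⟨h, hh, hconj, hxh, hyh⟩
    have hdet := (isUnit_iff_isUnit_det h).mp hh
    have hint : h * (γ'.map σ * γ') = γ.map σ * γ * h := by
      rw [← hconj, ← mul_assoc, mul_nonsing_inv_cancel_left _ _ hdet]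
    have hhy : h *ᵥ y' = y := by rw [← hyh, mulVec_mulVec, mul_nonsing_inv _ hdet, one_mulVec]
    have hσh : h.map σ = h := hcyc.map_eq_self_of_mul_eq_mul hξ hξ' hint hy' (hhy ▸ hy)
    have hδ : h⁻¹ * γ * h * (h⁻¹ * γ * h).map σ = γ'.map σ * γ' := by
      rw [Matrix.map_mul, Matrix.map_mul, map_nonsing_inv hh, hσh, ← hconj, ← hnorm]
      simp only [mul_assoc, mul_nonsing_inv_cancel_left _ _ hdet]
    obtain rfl : γ = γ' := hrep <| (isSigmaConj_inv_mul_mul hh hσh).trans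
      (isSigmaConj_of_mul_map_eq_map_mul hσ2 hτ hστ hγ' hδ)
    refine ⟨rfl, h, hh, ?_, hxh, hyh⟩
    have hγξ : Commute γ (γ.map σ * γ) := by rw [Commute, SemiconjBy, ← mul_assoc, hnorm]
    rw [hσh, inv_mul_mul_eq_of_commute hh (hcyc.commute_of_commute hint hγξ)]
  · rintro ⟨rfl, t, ht, htγ, hxt, hyt⟩
    refine ⟨t, ht, inv_mul_mul_eq_of_commute ht ?_, hxt, hyt⟩
    exact hnorm ▸ commute_mul_map_of_inv_mul_mul_map_eq hσ2 ht htγ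

theorem gl_side_orbit_matching
    {F E : Type*} [Field F] [Field E] [Algebra F E] [CharZero F] [CharZero E]
    (σ : E ≃ₐ[F] E)
    (hσ2 : ∀ x : E, σ (σ x) = x)
    (hfix : ∀ x : E, σ x = x ↔ x ∈ Set.range (algebraMap F E))
    (hdeg : Module.finrank F E = 2)
    (n : ℕ) (hn : 1 ≤ n)
    (γ γ' : Matrix (Fin n) (Fin n) E) (hγ : IsUnit γ) (hγ' : IsUnit γ')
    (hγnormal : ∀ i j, ((γ.map ⇑σ) * γ) i j ∈ Set.range (algebraMap F E))
    (hγ'normal : ∀ i j, ((γ'.map ⇑σ) * γ') i j ∈ Set.range (algebraMap F E))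
    (hrep : (∃ g : Matrix (Fin n) (Fin n) E, IsUnit g ∧ g⁻¹ * γ * g.map ⇑σ = γ') → γ = γ')
    (x x' : Fin n → E)
    (hx : ∀ i, x i ∈ Set.range (algebraMap F E))
    (hx' : ∀ i, x' i ∈ Set.range (algebraMap F E))
    (y y' : Fin n → E)
    (hy : ∀ i, σ (y i) = - y i)
    (hy' : ∀ i, σ (y' i) = - y' i)
    (hrss : TripleRegSemisimple ((γ.map ⇑σ) * γ) x y)
    (hrss' : TripleRegSemisimple ((γ'.map ⇑σ) * γ') x' y') :
    (∃ h : Matrix (Fin n) (Fin n) E, IsUnit h ∧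
        h⁻¹ * ((γ.map ⇑σ) * γ) * h = (γ'.map ⇑σ) * γ' ∧
        Matrix.vecMul x h = x' ∧ Matrix.mulVec h⁻¹ y = y') ↔
    (γ = γ' ∧ ∃ t : Matrix (Fin n) (Fin n) E, IsUnit t ∧ t⁻¹ * γ * t.map ⇑σ = γ ∧
        Matrix.vecMul x t = x' ∧ Matrix.mulVec t⁻¹ y = y') :=
  gl_side_orbit_matching_general σ hσ2 hfix hdeg n γ γ' hγ' hγnormal hγ'normal hrep x x' y y' hy hy'
    hrss'
end

section
/- Let β ∈ GL_n(E) be skew-Hermitian, and let ζ, ζ' ∈ GL_n(E) be normal with respect to β, with the property that ζ = ζ' whenever ζ' = g⁻¹ζh for some g, h ∈ U_n^β(F). Let z, z' ∈ E_n be row vectors, and assume that the triples [β⁻¹ζ*βζ, z, β⁻¹z*] and [β⁻¹ζ'*βζ', z', β⁻¹(z')*] are regular semisimple elements of M_n(E). Then there exists h ∈ GL_n(E) with h⁻¹(β⁻¹ζ*βζ)h = β⁻¹ζ'*βζ', zh = z' and h⁻¹(β⁻¹z*) = β⁻¹(z')* if and only if ζ = ζ' and there exists t ∈ U_n^β(F)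 commuting with ζ such that zt = z'. -/
/-!
STATEMENT 5: Matching of orbits on the unitary group side (Lemma on embedding
Y^β_rss into M_n(E)-orbits).
-/

open Matrix

section Aux

variable {F E : Type*} [Field F] [Field E] [Algebra F E] {n : ℕ}

/-- conjugate transpose w.r.t. σ -/
private def Sc (σ : E ≃ₐ[F] E) (A : Matrix (Fin n) (Fin n) E) : Matrix (Fin n) (Fin n) E :=
  (A.map ⇑σ)ᵀ

private lemma Sc_def (σ : E ≃ₐ[F] E) (A : Matrix (Fin n) (Fin n) E) :
    (A.map ⇑σ)ᵀ = Sc σ A := rfl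

private lemma Sc_mul (σ : E ≃ₐ[F] E) (A B : Matrix (Fin n) (Fin n) E) :
    Sc σ (A * B) = Sc σ B * Sc σ A := by
  ext i j
  simp [Sc, Matrix.mul_apply, Matrix.map_apply, map_sum, mul_comm]

private lemma Sc_Sc (σ : E ≃ₐ[F] E) (hσ2 : ∀ x : E, σ (σ x) = x)
    (A : Matrix (Fin n) (Fin n) E) : Sc σ (Sc σ A) = A := by
  ext i j; simp [Sc, Matrix.map_apply, hσ2]

private lemma Sc_one (σ : E ≃ₐ[F] E) : Sc σ (1 : Matrix (Fin n) (Fin n) E) = 1 := by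
  ext i j
  rcases eq_or_ne i j with h | h <;>
    simp [Sc, Matrix.map_apply, Matrix.one_apply, h, eq_comm]

private lemma Sc_neg (σ : E ≃ₐ[F] E) (A : Matrix (Fin n) (Fin n) E) :
    Sc σ (-A) = -(Sc σ A) := by
  ext i j; simp [Sc, Matrix.map_apply]

private lemma Sc_isUnit (σ : E ≃ₐ[F] E) {A : Matrix (Fin n) (Fin n) E} (hA : IsUnit A) :
    IsUnit (Sc σ A) := by
  have hd := A.isUnit_iff_isUnit_det.mp hA
  have h1 : Sc σ A * Sc σ A⁻¹ = 1 := by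
    rw [← Sc_mul, Matrix.nonsing_inv_mul A hd, Sc_one]
  have h2 : Sc σ A⁻¹ * Sc σ A = 1 := by
    rw [← Sc_mul, Matrix.mul_nonsing_inv A hd, Sc_one]
  exact ⟨⟨Sc σ A, Sc σ A⁻¹, h1, h2⟩, rfl⟩

private lemma Sc_inv (σ : E ≃ₐ[F] E) {A : Matrix (Fin n) (Fin n) E} (hA : IsUnit A) :
    Sc σ A⁻¹ = (Sc σ A)⁻¹ := by
  have hd := A.isUnit_iff_isUnit_det.mp hA
  refine (Matrix.inv_eq_left_inv ?_).symm
  rw [← Sc_mul, Matrix.mul_nonsing_inv A hd, Sc_one]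

private lemma sigma_vecMul (σ : E ≃ₐ[F] E) (A : Matrix (Fin n) (Fin n) E) (z : Fin n → E) :
    (fun i => σ (Matrix.vecMul z A i)) = Matrix.mulVec (Sc σ A) (fun i => σ (z i)) := by
  ext j
  simp [Sc, Matrix.vecMul, Matrix.mulVec, dotProduct, Matrix.map_apply, map_sum,
    mul_comm]

private lemma sigma_mulVec (σ : E ≃ₐ[F] E) (A : Matrix (Fin n) (Fin n) E) (w : Fin n → E) :
    (fun i => σ (Matrix.mulVec A w i)) = Matrix.vecMul (fun i => σ (w i)) (Sc σ A) := by
  ext j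
  simp [Sc, Matrix.vecMul, Matrix.mulVec, dotProduct, Matrix.map_apply, map_sum,
    mul_comm]

private lemma neg_inv' {A : Matrix (Fin n) (Fin n) E} (hA : IsUnit A) : (-A)⁻¹ = -A⁻¹ := by
  have hd := A.isUnit_iff_isUnit_det.mp hA
  refine Matrix.inv_eq_right_inv ?_
  rw [neg_mul_neg, Matrix.mul_nonsing_inv A hd]

private lemma matrix_eq_of_vecMul_eq {A B : Matrix (Fin n) (Fin n) E}
    (h : ∀ v, Matrix.vecMul v A = Matrix.vecMul v B) : A = B := by
  ext i j
  simpa using congrFun (h (Pi.single i 1)) j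

private lemma sum_smul_mulVec (c : Fin n → E) (M : Fin n → Matrix (Fin n) (Fin n) E)
    (y : Fin n → E) :
    Matrix.mulVec (∑ k, c k • M k) y = ∑ k, c k • Matrix.mulVec (M k) y := by
  ext i
  simp [Matrix.mulVec, dotProduct, Matrix.sum_apply, Finset.sum_mul, Finset.mul_sum,
    mul_assoc]
  rw [Finset.sum_comm]

private lemma poly_of_comm (ξ A : Matrix (Fin n) (Fin n) E) (y : Fin n → E)
    (hsp : Submodule.span E (Set.range fun k : Fin n => Matrix.mulVec (ξ ^ (k : ℕ)) y) = ⊤)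
    (hA : A * ξ = ξ * A) : ∃ c : Fin n → E, A = ∑ k : Fin n, c k • ξ ^ (k : ℕ) := by
  have hmem : Matrix.mulVec A y ∈
      Submodule.span E (Set.range fun k : Fin n => Matrix.mulVec (ξ ^ (k : ℕ)) y) := by
    rw [hsp]; trivial
  obtain ⟨c, hc⟩ := (Submodule.mem_span_range_iff_exists_fun E).1 hmem
  refine ⟨c, ?_⟩
  set P : Matrix (Fin n) (Fin n) E := ∑ k : Fin n, c k • ξ ^ (k : ℕ) with hP
  have hAk : ∀ k : ℕ, A * ξ ^ k = ξ ^ k * A := fun k =>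
    (show Commute A ξ from hA).pow_right k
  have hPk : P * ξ = ξ * P := by
    rw [hP, Finset.sum_mul, Finset.mul_sum]
    refine Finset.sum_congr rfl fun k _ => ?_
    rw [smul_mul_assoc, Matrix.mul_smul, ← pow_succ, ← pow_succ']
  have hPy : Matrix.mulVec P y = Matrix.mulVec A y := by
    rw [hP, sum_smul_mulVec, hc]
  -- A - P kills all spanning vectors
  have hker : ∀ v ∈ Submodule.span E
      (Set.range fun k : Fin n => Matrix.mulVec (ξ ^ (k : ℕ)) y),
      Matrix.mulVec A v = Matrix.mulVec P v := by
    intro v hv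
    induction hv using Submodule.span_induction with
    | mem x hx =>
      obtain ⟨k, rfl⟩ := hx
      have hPkn : ξ ^ (k : ℕ) * P = P * ξ ^ (k : ℕ) :=
        ((show Commute P ξ from hPk).pow_right (k : ℕ)).symm
      calc A *ᵥ (ξ ^ (k : ℕ) *ᵥ y) = (ξ ^ (k : ℕ) * A) *ᵥ y := by
            rw [Matrix.mulVec_mulVec, hAk]
        _ = ξ ^ (k : ℕ) *ᵥ (P *ᵥ y) := by rw [← Matrix.mulVec_mulVec, hPy]
        _ = P *ᵥ (ξ ^ (k : ℕ) *ᵥ y) := by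
            rw [Matrix.mulVec_mulVec, hPkn, ← Matrix.mulVec_mulVec]
    | zero => simp
    | add x y' _ _ h1 h2 => simp [Matrix.mulVec_add, h1, h2]
    | smul a x _ h1 => simp [Matrix.mulVec_smul, h1]
  have : ∀ v, Matrix.mulVec A v = Matrix.mulVec P v := fun v =>
    hker v (by rw [hsp]; trivial)
  ext i j
  have := congrFun (this (Pi.single j 1)) i
  simpa using this

private lemma theta_fixed (σ : E ≃ₐ[F] E) (hσ2 : ∀ x : E, σ (σ x) = x)
    {β : Matrix (Fin n) (Fin n) E} [Invertible β]
    (hskew : Sc σ β = -β) (hSβinv : Sc σ β⁻¹ = -β⁻¹) (ζ : Matrix (Fin n) (Fin n) E) :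
    β⁻¹ * Sc σ (β⁻¹ * Sc σ ζ * β * ζ) * β = β⁻¹ * Sc σ ζ * β * ζ := by
  simp only [Sc_mul, Sc_Sc σ hσ2, hskew, hSβinv]
  simp [mul_assoc]

end Aux

set_option maxHeartbeats 1000000 in
theorem unitary_side_orbit_matching
    {F E : Type*} [Field F] [Field E] [Algebra F E]
    (σ : E ≃ₐ[F] E)
    (hσ2 : ∀ x : E, σ (σ x) = x)
    (hfix : ∀ x : E, σ x = x ↔ x ∈ Set.range (algebraMap F E))
    (hdeg : Module.finrank F E = 2)
    (n : ℕ) (hn : 1 ≤ n)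
    (β : Matrix (Fin n) (Fin n) E) (hβ : IsUnit β)
    (hskew : (β.map ⇑σ)ᵀ = -β)
    (ζ ζ' : Matrix (Fin n) (Fin n) E) (hζ : IsUnit ζ) (hζ' : IsUnit ζ')
    (hζnormal : ζ * (β⁻¹ * (ζ.map ⇑σ)ᵀ * β * ζ) = (β⁻¹ * (ζ.map ⇑σ)ᵀ * β * ζ) * ζ)
    (hζ'normal : ζ' * (β⁻¹ * (ζ'.map ⇑σ)ᵀ * β * ζ') = (β⁻¹ * (ζ'.map ⇑σ)ᵀ * β * ζ') * ζ')
    (hrep : (∃ g : Matrix (Fin n) (Fin n) E, (IsUnit g ∧ (g.map ⇑σ)ᵀ * β * g = β) ∧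
        ∃ h : Matrix (Fin n) (Fin n) E, (IsUnit h ∧ (h.map ⇑σ)ᵀ * β * h = β) ∧
          g⁻¹ * ζ * h = ζ') → ζ = ζ')
    (z z' : Fin n → E)
    (hrss : TripleRegSemisimple (β⁻¹ * (ζ.map ⇑σ)ᵀ * β * ζ) z
      (Matrix.mulVec β⁻¹ fun i => σ (z i)))
    (hrss' : TripleRegSemisimple (β⁻¹ * (ζ'.map ⇑σ)ᵀ * β * ζ') z'
      (Matrix.mulVec β⁻¹ fun i => σ (z' i))) :
    (∃ h : Matrix (Fin n) (Fin n) E, IsUnit h ∧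
        h⁻¹ * (β⁻¹ * (ζ.map ⇑σ)ᵀ * β * ζ) * h = β⁻¹ * (ζ'.map ⇑σ)ᵀ * β * ζ' ∧
        Matrix.vecMul z h = z' ∧
        Matrix.mulVec h⁻¹ (Matrix.mulVec β⁻¹ fun i => σ (z i)) =
          (Matrix.mulVec β⁻¹ fun i => σ (z' i))) ↔
    (ζ = ζ' ∧ ∃ t : Matrix (Fin n) (Fin n) E,
        (IsUnit t ∧ (t.map ⇑σ)ᵀ * β * t = β) ∧ t * ζ = ζ * t ∧
        Matrix.vecMul z t = z') := by
  classical
  simp only [Sc_def] at hskew hζnormal hζ'normal hrep ⊢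
  simp only [Sc_def] at hrss hrss'
  have hβd : IsUnit β.det := (Matrix.isUnit_iff_isUnit_det β).mp hβ
  have hζd : IsUnit ζ.det := (Matrix.isUnit_iff_isUnit_det ζ).mp hζ
  have hζ'd : IsUnit ζ'.det := (Matrix.isUnit_iff_isUnit_det ζ').mp hζ'
  haveI iβ : Invertible β := β.invertibleOfIsUnitDet hβd
  haveI iζ : Invertible ζ := ζ.invertibleOfIsUnitDet hζd
  haveI iζ' : Invertible ζ' := ζ'.invertibleOfIsUnitDet hζ'd
  have hSβinv : Sc σ β⁻¹ = -β⁻¹ := by rw [Sc_inv σ hβ, hskew, neg_inv' hβ]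
  set ξ : Matrix (Fin n) (Fin n) E := β⁻¹ * Sc σ ζ * β * ζ with hξdef
  set ξ' : Matrix (Fin n) (Fin n) E := β⁻¹ * Sc σ ζ' * β * ζ' with hξ'def
  constructor
  · rintro ⟨h, hh, hconj, hzh, hyh⟩
    have hhd : IsUnit h.det := (Matrix.isUnit_iff_isUnit_det h).mp hh
    haveI ih : Invertible h := h.invertibleOfIsUnitDet hhd
    have hShU : IsUnit (Sc σ h) := Sc_isUnit σ hh
    haveI iSh : Invertible (Sc σ h) :=
      (Sc σ h).invertibleOfIsUnitDet ((Matrix.isUnit_iff_isUnit_det _).mp hShU)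
    haveI iSζ : Invertible (Sc σ ζ) :=
      (Sc σ ζ).invertibleOfIsUnitDet ((Matrix.isUnit_iff_isUnit_det _).mp (Sc_isUnit σ hζ))
    haveI iSζ' : Invertible (Sc σ ζ') :=
      (Sc σ ζ').invertibleOfIsUnitDet ((Matrix.isUnit_iff_isUnit_det _).mp (Sc_isUnit σ hζ'))
    obtain ⟨-, hrow, hcol⟩ := hrss
    -- θ-fixedness of ξ and ξ'
    have hθξ : β⁻¹ * Sc σ ξ * β = ξ := by
      rw [hξdef]; exact theta_fixed σ hσ2 hskew hSβinv ζ
    have hθξ' : β⁻¹ * Sc σ ξ' * β = ξ' := by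
      rw [hξ'def]; exact theta_fixed σ hσ2 hskew hSβinv ζ'
    have hScξ : Sc σ ξ = β * (ξ * β⁻¹) := by
      have e := congrArg (fun X => β * X * β⁻¹) hθξ
      simpa [mul_assoc] using e
    -- m := h * (β⁻¹ * Sc σ h * β) commutes with ξ
    have e : β⁻¹ * (Sc σ h * (Sc σ ξ * (Sc σ h)⁻¹)) * β = h⁻¹ * ξ * h := by
      have e0 := congrArg (fun X => β⁻¹ * Sc σ X * β) hconj
      simp only [Sc_mul, Sc_inv σ hh] at e0
      rw [hθξ'] at e0
      rw [← hconj] at e0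
      simpa [mul_assoc] using e0
    have hmξ : ξ * (h * (β⁻¹ * Sc σ h * β)) = h * (β⁻¹ * Sc σ h * β) * ξ := by
      have e2 := congrArg (fun X => h * X * (β⁻¹ * Sc σ h * β)) e
      simp only [hScξ] at e2
      simp only [mul_assoc] at e2 ⊢
      simp only [Matrix.mul_inv_cancel_left_of_invertible,
        Matrix.inv_mul_cancel_left_of_invertible, Matrix.mul_inv_of_invertible,
        Matrix.inv_mul_of_invertible, one_mul, mul_one] at e2 ⊢
      exact e2.symm
    -- z is fixed by m
    have h2 : Matrix.mulVec (β * (h⁻¹ * β⁻¹)) (fun i => σ (z i)) = fun i => σ (z' i) := by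
      rw [← Matrix.mulVec_mulVec, ← Matrix.mulVec_mulVec, hyh, Matrix.mulVec_mulVec,
        Matrix.mul_inv_of_invertible, Matrix.one_mulVec]
    have h4 : Matrix.vecMul z (Sc σ (β * (h⁻¹ * β⁻¹))) = z' := by
      have h5 := sigma_mulVec σ (β * (h⁻¹ * β⁻¹)) (fun i => σ (z i))
      simp only [h2, hσ2] at h5
      exact h5.symm
    have hScM : Sc σ (β * (h⁻¹ * β⁻¹)) = β⁻¹ * ((Sc σ h)⁻¹ * β) := by
      simp only [Sc_mul, hSβinv, Sc_inv σ hh, hskew]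
      simp [mul_assoc]
    have hz_s : Matrix.vecMul z (β⁻¹ * ((Sc σ h)⁻¹ * β)) = z' := by rw [← hScM]; exact h4
    have hzm : Matrix.vecMul z (h * (β⁻¹ * Sc σ h * β)) = z := by
      rw [← Matrix.vecMul_vecMul, hzh, ← hz_s, Matrix.vecMul_vecMul]
      rw [show β⁻¹ * ((Sc σ h)⁻¹ * β) * (β⁻¹ * Sc σ h * β) = 1 by
        simp only [mul_assoc]
        simp only [Matrix.mul_inv_cancel_left_of_invertible,
          Matrix.inv_mul_cancel_left_of_invertible, Matrix.mul_inv_of_invertible,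
          Matrix.inv_mul_of_invertible, one_mul, mul_one]]
      exact Matrix.vecMul_one z
    -- conclude m = 1
    have hm1 : h * (β⁻¹ * Sc σ h * β) = 1 := by
      apply matrix_eq_of_vecMul_eq
      intro v
      have hv : v ∈ Submodule.span E
          (Set.range fun k : Fin n => Matrix.vecMul z (ξ ^ (k : ℕ))) := by
        rw [hrow]; trivial
      rw [Matrix.vecMul_one]
      induction hv using Submodule.span_induction with
      | mem x hx =>
        obtain ⟨k, rfl⟩ := hx
        have hck : ξ ^ (k : ℕ) * (h * (β⁻¹ * Sc σ h * β)) =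
            h * (β⁻¹ * Sc σ h * β) * ξ ^ (k : ℕ) :=
          ((show Commute ξ (h * (β⁻¹ * Sc σ h * β)) from hmξ).pow_left (k : ℕ))
        rw [Matrix.vecMul_vecMul, hck, ← Matrix.vecMul_vecMul, hzm]
      | zero => simp
      | add x y hx hy ihx ihy => simp only [Matrix.add_vecMul, ihx, ihy]
      | smul a x hx ihx => simp only [Matrix.smul_vecMul, ihx]
    have hhinv : h⁻¹ = β⁻¹ * Sc σ h * β := Matrix.inv_eq_right_inv hm1
    -- h is unitary
    have hU : Sc σ h * β * h = β := by
      have e2 := congrArg (fun X => β * X * h) hhinv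
      simpa [mul_assoc] using e2.symm
    have hβhinv : β * h⁻¹ = Sc σ h * β := by
      have e2 := congrArg (fun X => X * h⁻¹) hU
      simpa [mul_assoc] using e2.symm
    -- ζ = ζ'
    have key : Sc σ h * (Sc σ ζ * (β * (ζ * h))) = Sc σ ζ' * (β * ζ') := by
      have e2 := congrArg (fun X => β * X) hconj
      rw [hξdef, hξ'def] at e2
      simp only [mul_assoc] at e2
      rw [show ∀ X, β * (h⁻¹ * X) = Sc σ h * (β * X) from fun X => by
        rw [← mul_assoc, hβhinv, mul_assoc]] at e2
      simpa [mul_assoc] using e2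
    have keyX : ∀ X, Sc σ h * (Sc σ ζ * (β * (ζ * (h * X)))) = Sc σ ζ' * (β * (ζ' * X)) := by
      intro X
      have e2 := congrArg (fun Y => Y * X) key
      simpa [mul_assoc] using e2
    have hζ'invU : IsUnit ζ'⁻¹ :=
      ⟨⟨ζ'⁻¹, ζ', Matrix.nonsing_inv_mul ζ' hζ'd, Matrix.mul_nonsing_inv ζ' hζ'd⟩, rfl⟩
    have hgU : Sc σ (ζ * h * ζ'⁻¹) * β * (ζ * h * ζ'⁻¹) = β := by
      simp only [Sc_mul, Sc_inv σ hζ']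
      simp only [mul_assoc]
      rw [keyX]
      simp only [Matrix.inv_mul_cancel_left_of_invertible,
        Matrix.mul_inv_cancel_left_of_invertible, Matrix.mul_inv_of_invertible, mul_one]
    have hginv : (ζ * h * ζ'⁻¹)⁻¹ = ζ' * (h⁻¹ * ζ⁻¹) := by
      apply Matrix.inv_eq_right_inv
      simp only [mul_assoc]
      simp only [Matrix.inv_mul_cancel_left_of_invertible,
        Matrix.mul_inv_cancel_left_of_invertible, Matrix.mul_inv_of_invertible,
        Matrix.inv_mul_of_invertible, one_mul, mul_one]
    have hζeq : ζ = ζ' := by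
      apply hrep
      refine ⟨ζ * h * ζ'⁻¹, ⟨(hζ.mul hh).mul hζ'invU, hgU⟩, h, ⟨hh, hU⟩, ?_⟩
      rw [hginv]
      simp only [mul_assoc]
      simp only [Matrix.inv_mul_cancel_left_of_invertible,
        Matrix.mul_inv_cancel_left_of_invertible, Matrix.inv_mul_of_invertible, mul_one]
    -- h commutes with ξ, hence with ζ
    have hξ'ξ : ξ' = ξ := by rw [hξdef, hξ'def, hζeq]
    have hcomm : h * ξ = ξ * h := by
      have e2 := congrArg (fun X => h * X) hconj
      rw [hξ'ξ] at e2
      simpa [mul_assoc] using e2.symm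
    obtain ⟨c, hc⟩ := poly_of_comm ξ h (Matrix.mulVec β⁻¹ fun i => σ (z i)) hcol hcomm
    have hfin : h * ζ = ζ * h := by
      rw [hc, Finset.sum_mul, Finset.mul_sum]
      refine Finset.sum_congr rfl fun k _ => ?_
      rw [smul_mul_assoc, mul_smul_comm]
      exact congrArg _ ((show Commute ζ ξ from hζnormal).pow_right (k : ℕ)).symm
    exact ⟨hζeq, h, ⟨hh, hU⟩, hfin, hzh⟩
  · rintro ⟨hζeq, t, ⟨htU, htβ⟩, htζ, hzt⟩
    have htd : IsUnit t.det := (Matrix.isUnit_iff_isUnit_det t).mp htU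
    haveI it : Invertible t := t.invertibleOfIsUnitDet htd
    have hStU : IsUnit (Sc σ t) := Sc_isUnit σ htU
    haveI iSt : Invertible (Sc σ t) :=
      (Sc σ t).invertibleOfIsUnitDet ((Matrix.isUnit_iff_isUnit_det _).mp hStU)
    have hξ'ξ : ξ' = ξ := by rw [hξdef, hξ'def, hζeq]
    rw [hξ'ξ]
    refine ⟨t, htU, ?_, hzt, ?_⟩
    · -- conjugation fixes ξ
      have r_bt : β * t = (Sc σ t)⁻¹ * β := by
        have e := congrArg (fun X => (Sc σ t)⁻¹ * X) htβ
        simpa [mul_assoc] using e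
      have r_binv : β⁻¹ * (Sc σ t)⁻¹ = t * β⁻¹ := by
        have e := congrArg (fun X => β⁻¹ * X * β⁻¹) r_bt
        simpa [mul_assoc] using e.symm
      have hSt : Sc σ ζ * Sc σ t = Sc σ t * Sc σ ζ := by
        have e := congrArg (Sc σ) htζ
        rwa [Sc_mul, Sc_mul] at e
      have r_comm : Sc σ ζ * (Sc σ t)⁻¹ = (Sc σ t)⁻¹ * Sc σ ζ := by
        have e := congrArg (fun X => (Sc σ t)⁻¹ * X * (Sc σ t)⁻¹) hSt
        simpa [mul_assoc] using e.symm
      have key : ξ * t = t * ξ := by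
        rw [hξdef]
        simp only [mul_assoc]
        rw [← htζ]
        rw [show ∀ X, β * (t * X) = (Sc σ t)⁻¹ * (β * X) from fun X => by
          rw [← mul_assoc, r_bt, mul_assoc]]
        rw [show ∀ X, Sc σ ζ * ((Sc σ t)⁻¹ * X) = (Sc σ t)⁻¹ * (Sc σ ζ * X) from fun X => by
          rw [← mul_assoc, r_comm, mul_assoc]]
        rw [show ∀ X, β⁻¹ * ((Sc σ t)⁻¹ * X) = t * (β⁻¹ * X) from fun X => by
          rw [← mul_assoc, r_binv, mul_assoc]]
      rw [mul_assoc, key, ← mul_assoc, Matrix.inv_mul_of_invertible, one_mul]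
    · -- the second vector condition
      have r_bt : β * t = (Sc σ t)⁻¹ * β := by
        have e := congrArg (fun X => (Sc σ t)⁻¹ * X) htβ
        simpa [mul_assoc] using e
      have r_binv : β⁻¹ * (Sc σ t)⁻¹ = t * β⁻¹ := by
        have e := congrArg (fun X => β⁻¹ * X * β⁻¹) r_bt
        simpa [mul_assoc] using e.symm
      have hσz' : (fun i => σ (z' i)) = Matrix.mulVec (Sc σ t) (fun i => σ (z i)) := by
        simp only [← hzt]
        exact sigma_vecMul σ t z
      rw [hσz', Matrix.mulVec_mulVec, Matrix.mulVec_mulVec]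
      have e := congrArg (fun X => t⁻¹ * X * Sc σ t) r_binv
      have e2 : t⁻¹ * β⁻¹ = β⁻¹ * Sc σ t := by simpa [mul_assoc] using e
      rw [e2]
end
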